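/- arXiv:nlin/0703016 — 6 statements merged into one kernel-verified Lean document; each statement's English description precedes it below -/
import Mathlib

section
/- Let 0 < α < 1, κ > 0, and q(z) = z³ - (3(1+α²+κ)/(2α))z² + 3z - (1+α²+κ)/(2α). Then q has exactly one real root, and that root is greater than 1. -/
lemma q_aux (c : ℝ) (hc1 : 1 < c) :
    (∃! z : ℝ, z ^ 3 - 3 * c * z ^ 2 + 3 * z - c = 0) ∧
    (∀ z : ℝ, z ^ 3 - 3 * c * z ^ 2 + 3 * z - c = 0 → 1 < z) := by
  have hgt : ∀ z : ℝ, z ^ 3 - 3 * c * z ^ 2 + 3 * z - c = 0 → 1 < z := by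
    intro z hz
    by_contra hle
    push_neg at hle
    nlinarith [mul_nonneg (sub_nonneg.mpr hle) (sq_nonneg (1 - z)),
      mul_pos (sub_pos.mpr hc1) (by positivity : (0:ℝ) < 3 * z ^ 2 + 1)]
  have huniq : ∀ a b : ℝ, a ^ 3 - 3 * c * a ^ 2 + 3 * a - c = 0 →
      b ^ 3 - 3 * c * b ^ 2 + 3 * b - c = 0 → a = b := by
    intro a b ha hb
    have hD : (b - a) * ((a - b) ^ 2 + 3 * (a * b - 1) ^ 2) = 0 := by
      linear_combination (3 * a ^ 2 + 1) * hb - (3 * b ^ 2 + 1) * ha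
    rcases mul_eq_zero.mp hD with h | h
    · linarith
    · have h1 : (a - b) ^ 2 = 0 := by nlinarith [sq_nonneg (a * b - 1)]
      have := pow_eq_zero_iff (n := 2) (by norm_num) |>.mp h1
      linarith
  have hcont : Continuous fun z : ℝ => z ^ 3 - 3 * c * z ^ 2 + 3 * z - c := by fun_prop
  have h14 : (1:ℝ) ≤ 4 * c := by linarith
  have hiv := intermediate_value_Icc h14 hcont.continuousOn
  have hmem : (0:ℝ) ∈ Set.Icc ((fun z : ℝ => z ^ 3 - 3 * c * z ^ 2 + 3 * z - c) 1)
      ((fun z : ℝ => z ^ 3 - 3 * c * z ^ 2 + 3 * z - c) (4 * c)) := by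
    constructor
    · simp only
      nlinarith
    · simp only
      nlinarith [pow_pos (by linarith : (0:ℝ) < c) 3]
  obtain ⟨z, _, hz⟩ := hiv hmem
  exact ⟨⟨z, hz, fun y hy => huniq y z hy hz⟩, hgt⟩

theorem q_unique_real_root (α κ : ℝ) (hα : 0 < α) (hα1 : α < 1) (hκ : 0 < κ) :
    (∃! z : ℝ, z ^ 3 - (3 * (1 + α ^ 2 + κ) / (2 * α)) * z ^ 2 + 3 * z
        - (1 + α ^ 2 + κ) / (2 * α) = 0) ∧
    (∀ z : ℝ, z ^ 3 - (3 * (1 + α ^ 2 + κ) / (2 * α)) * z ^ 2 + 3 * z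
        - (1 + α ^ 2 + κ) / (2 * α) = 0 → 1 < z) := by
  have h2α : (0:ℝ) < 2 * α := by linarith
  have hc1 : 1 < (1 + α ^ 2 + κ) / (2 * α) := by
    rw [lt_div_iff₀ h2α]
    nlinarith [sq_nonneg (1 - α)]
  have hrw : 3 * (1 + α ^ 2 + κ) / (2 * α) = 3 * ((1 + α ^ 2 + κ) / (2 * α)) := by
    ring
  rw [hrw]
  exact q_aux _ hc1
end

section
/- Consider the ODE ω̇₃ = -ω₃ θ̇ sin θ · (mR²I₃(α - cos θ) + mR²I₁ cos θ)/(mR²I₃(α - cos θ)² + I₁I₃ + mR²I₁ sin²θ) along smooth curves θ(t), ω₃(t). Then D(t) = I₃ ω₃(t)·[I₁I₃ + mR²I₃(α - cos θ(t))² + mR²I₁ sin²θ(t)]^{1/2} is constant in t. -/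
/-!
Along a solution, `ω₃' = -ω₃ Q' / (2 Q)` where `Q(θ) = I₁I₃ + mR²I₃(α - cos θ)² + mR²I₁ sin² θ`,
because `Q'` is exactly twice the numerator of the ODE. So `√Q` is an integrating factor:
`(ω₃ √Q)' = √Q (ω₃' + ω₃ Q' / (2Q)) = 0`, and `D = I₃ ω₃ √Q` is constant.
-/

open Real

theorem mul_sqrt_eq_of_hasDerivAt {Q Q' ω : ℝ → ℝ} (hQ : ∀ t, 0 < Q t)
    (hQ' : ∀ t, HasDerivAt Q (Q' t) t)
    (hω : ∀ t, HasDerivAt ω (-ω t * Q' t / (2 * Q t)) t) (s t : ℝ) :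
    ω s * √(Q s) = ω t * √(Q t) := by
  have hderiv : ∀ t, HasDerivAt (fun t => ω t * √(Q t)) 0 t := by
    intro t
    have hQne : Q t ≠ 0 := (hQ t).ne'
    have hsq : √(Q t) ^ 2 = Q t := sq_sqrt (hQ t).le
    refine ((hω t).mul ((hQ' t).sqrt hQne)).congr_deriv ?_
    field_simp
    rw [hsq]
    ring
  exact is_const_of_deriv_eq_zero (fun t => (hderiv t).differentiableAt)
    (fun t => (hderiv t).deriv) s t

noncomputable def routhRadicand (m R I₁ I₃ α x : ℝ) : ℝ :=
  I₁ * I₃ + m * R ^ 2 * I₃ * (α - cos x) ^ 2 + m * R ^ 2 * I₁ * sin x ^ 2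

theorem routhRadicand_pos {m I₁ I₃ : ℝ} (hm : 0 < m) (hI₁ : 0 < I₁) (hI₃ : 0 < I₃)
    (R α x : ℝ) : 0 < routhRadicand m R I₁ I₃ α x := by
  unfold routhRadicand
  positivity

theorem hasDerivAt_routhRadicand_comp (m R I₁ I₃ α : ℝ) {θ : ℝ → ℝ} {θ' t : ℝ}
    (hθ : HasDerivAt θ θ' t) :
    HasDerivAt (fun t => routhRadicand m R I₁ I₃ α (θ t))
      (2 * θ' * sin (θ t) *
        (m * R ^ 2 * I₃ * (α - cos (θ t)) + m * R ^ 2 * I₁ * cos (θ t))) t := by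
  have hcos := hθ.cos
  have hsin := hθ.sin
  refine ((((hasDerivAt_const t α).fun_sub hcos).fun_pow 2).const_mul (m * R ^ 2 * I₃)
    |>.const_add (I₁ * I₃) |>.add ((hsin.fun_pow 2).const_mul (m * R ^ 2 * I₁))).congr_deriv ?_
  push_cast
  ring

theorem routh_integral_conserved_general
    (m R I₁ I₃ α : ℝ) (hm : 0 < m) (hI₁ : 0 < I₁) (hI₃ : 0 < I₃)
    (θ ω₃ θ' : ℝ → ℝ)
    (hθ : ∀ t, HasDerivAt θ (θ' t) t)
    (hω : ∀ t, HasDerivAt ω₃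
      (-(ω₃ t) * θ' t * Real.sin (θ t) *
        (m * R ^ 2 * I₃ * (α - Real.cos (θ t)) + m * R ^ 2 * I₁ * Real.cos (θ t)) /
        (m * R ^ 2 * I₃ * (α - Real.cos (θ t)) ^ 2 + I₁ * I₃ +
          m * R ^ 2 * I₁ * Real.sin (θ t) ^ 2)) t) :
    ∀ s t : ℝ,
      I₃ * ω₃ s * Real.sqrt (I₁ * I₃ + m * R ^ 2 * I₃ * (α - Real.cos (θ s)) ^ 2 +
          m * R ^ 2 * I₁ * Real.sin (θ s) ^ 2)
      = I₃ * ω₃ t * Real.sqrt (I₁ * I₃ + m * R ^ 2 * I₃ * (α - Real.cos (θ t)) ^ 2 +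
          m * R ^ 2 * I₁ * Real.sin (θ t) ^ 2) := by
  intro s t
  have hω' : ∀ t, HasDerivAt ω₃ (-ω₃ t *
      (2 * θ' t * sin (θ t) *
        (m * R ^ 2 * I₃ * (α - cos (θ t)) + m * R ^ 2 * I₁ * cos (θ t))) /
      (2 * routhRadicand m R I₁ I₃ α (θ t))) t := fun t =>
    (hω t).congr_deriv (by
      rw [show m * R ^ 2 * I₃ * (α - cos (θ t)) ^ 2 + I₁ * I₃ + m * R ^ 2 * I₁ * sin (θ t) ^ 2
          = routhRadicand m R I₁ I₃ α (θ t) by unfold routhRadicand; ring]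
      ring)
  have hD := mul_sqrt_eq_of_hasDerivAt (fun t => routhRadicand_pos hm hI₁ hI₃ R α (θ t))
    (fun t => hasDerivAt_routhRadicand_comp m R I₁ I₃ α (hθ t)) hω' s t
  unfold routhRadicand at hD
  rw [mul_assoc, hD, ← mul_assoc]

theorem routh_integral_conserved
    (m R I₁ I₃ α : ℝ) (hm : 0 < m) (hR : 0 < R) (hI₁ : 0 < I₁) (hI₃ : 0 < I₃)
    (hα : 0 < α) (hα1 : α < 1)
    (θ ω₃ θ' : ℝ → ℝ)
    (hθ : ∀ t, HasDerivAt θ (θ' t) t)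
    (hω : ∀ t, HasDerivAt ω₃
      (-(ω₃ t) * θ' t * Real.sin (θ t) *
        (m * R ^ 2 * I₃ * (α - Real.cos (θ t)) + m * R ^ 2 * I₁ * Real.cos (θ t)) /
        (m * R ^ 2 * I₃ * (α - Real.cos (θ t)) ^ 2 + I₁ * I₃ +
          m * R ^ 2 * I₁ * Real.sin (θ t) ^ 2)) t) :
    ∀ s t : ℝ,
      I₃ * ω₃ s * Real.sqrt (I₁ * I₃ + m * R ^ 2 * I₃ * (α - Real.cos (θ s)) ^ 2 +
          m * R ^ 2 * I₁ * Real.sin (θ s) ^ 2)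
      = I₃ * ω₃ t * Real.sqrt (I₁ * I₃ + m * R ^ 2 * I₃ * (α - Real.cos (θ t)) ^ 2 +
          m * R ^ 2 * I₁ * Real.sin (θ t) ^ 2) :=
  routh_integral_conserved_general m R I₁ I₃ α hm hI₁ hI₃ θ ω₃ θ' hθ hω
end

section
/- Let θ : ℝ → (0, π), φ, ω₃ : ℝ → ℝ be differentiable functions satisfying φ̈ = (ω₃θ̇/sin θ)·(I₃² + mR²I₃(1 - α cos θ))/(I₁I₃ + mR²I₁sin²θ + mR²I₃(α - cos θ)²) - 2φ̇θ̇ cos θ/sin θ and ω̇₃ = -ω₃θ̇ sin θ·(mR²I₃(α - cos θ) + mR²I₁cos θ)/(mR²I₃(α - cos θ)² + I₁I₃ + mR²I₁sin²θ). Then λ(t) = I₁φ̇ sin²θ - (α - cos θ)I₃ω₃ is constant in t. -/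
/-!
Along a solution, `λ̇ = ω₃ θ̇ sin θ · (I₁ N + (α - cos θ) I₃ M - I₃ D) / D`, where `N / D` and
`M / D` are the two rational factors in the equations of motion (with `k = m R²`). The bracket
vanishes identically by `sin² θ + cos² θ = 1`, so `λ` has zero derivative everywhere.
-/

open Real

lemma jellett_numerator_identity (k I₁ I₃ α : ℝ) {s c : ℝ} (hsc : s ^ 2 + c ^ 2 = 1) :
    I₁ * (I₃ ^ 2 + k * I₃ * (1 - α * c)) + (α - c) * I₃ * (k * I₃ * (α - c) + k * I₁ * c) =
      I₃ * (I₁ * I₃ + k * I₁ * s ^ 2 + k * I₃ * (α - c) ^ 2) := by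
  linear_combination (-(k * I₁ * I₃)) * hsc

lemma jellett_derivative_eq_zero {k I₁ I₃ α s c w p d : ℝ} (hsc : s ^ 2 + c ^ 2 = 1)
    (hD : I₁ * I₃ + k * I₁ * s ^ 2 + k * I₃ * (α - c) ^ 2 ≠ 0) :
    I₁ * ((w * d / s) * ((I₃ ^ 2 + k * I₃ * (1 - α * c)) /
        (I₁ * I₃ + k * I₁ * s ^ 2 + k * I₃ * (α - c) ^ 2)) - 2 * p * d * c / s) * s ^ 2
      + 2 * I₁ * p * s * c * d
      - (s * d * I₃ * w + (α - c) * I₃ * (-w * d * s *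
        ((k * I₃ * (α - c) + k * I₁ * c) / (k * I₃ * (α - c) ^ 2 + I₁ * I₃ + k * I₁ * s ^ 2))))
      = 0 := by
  -- every term carries a factor `s`, so the junk value of `/ 0` at `s = 0` is harmless
  rcases eq_or_ne s 0 with rfl | hs
  · simp
  have key := jellett_numerator_identity k I₁ I₃ α hsc
  rw [show k * I₃ * (α - c) ^ 2 + I₁ * I₃ + k * I₁ * s ^ 2
      = I₁ * I₃ + k * I₁ * s ^ 2 + k * I₃ * (α - c) ^ 2 by ring]
  generalize I₁ * I₃ + k * I₁ * s ^ 2 + k * I₃ * (α - c) ^ 2 = D at hD key ⊢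
  field_simp
  linear_combination (w * d * s) * key

lemma hasDerivAt_jellett {I₁ I₃ α t θ' p' w' : ℝ} {θ p w : ℝ → ℝ}
    (hθ : HasDerivAt θ θ' t) (hp : HasDerivAt p p' t) (hw : HasDerivAt w w' t) :
    HasDerivAt (fun t ↦ I₁ * p t * sin (θ t) ^ 2 - (α - cos (θ t)) * I₃ * w t)
      (I₁ * p' * sin (θ t) ^ 2 + 2 * I₁ * p t * sin (θ t) * cos (θ t) * θ'
        - (sin (θ t) * θ' * I₃ * w t + (α - cos (θ t)) * I₃ * w')) t :=
  (((hp.const_mul I₁).mul (hθ.sin.pow 2)).sub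
    (((hθ.cos.const_sub α).mul_const I₃).mul hw)).congr_deriv
      (by simp only [Pi.pow_apply, Nat.cast_ofNat, Nat.add_one_sub_one, pow_one]; ring)

theorem jellett_integral_conserved_general
    (m R I₁ I₃ α : ℝ) (hm : 0 < m) (hI₁ : 0 < I₁) (hI₃ : 0 < I₃)
    (θ ω₃ θ' φ' : ℝ → ℝ)
    (hθ : ∀ t, HasDerivAt θ (θ' t) t)
    (hφ' : ∀ t, HasDerivAt φ'
      ((ω₃ t * θ' t / Real.sin (θ t)) *
        ((I₃ ^ 2 + m * R ^ 2 * I₃ * (1 - α * Real.cos (θ t))) /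
          (I₁ * I₃ + m * R ^ 2 * I₁ * Real.sin (θ t) ^ 2 +
            m * R ^ 2 * I₃ * (α - Real.cos (θ t)) ^ 2))
        - 2 * φ' t * θ' t * Real.cos (θ t) / Real.sin (θ t)) t)
    (hω : ∀ t, HasDerivAt ω₃
      (-(ω₃ t) * θ' t * Real.sin (θ t) *
        ((m * R ^ 2 * I₃ * (α - Real.cos (θ t)) + m * R ^ 2 * I₁ * Real.cos (θ t)) /
          (m * R ^ 2 * I₃ * (α - Real.cos (θ t)) ^ 2 + I₁ * I₃ +
            m * R ^ 2 * I₁ * Real.sin (θ t) ^ 2))) t) :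
    ∀ s t : ℝ,
      I₁ * φ' s * Real.sin (θ s) ^ 2 - (α - Real.cos (θ s)) * I₃ * ω₃ s
      = I₁ * φ' t * Real.sin (θ t) ^ 2 - (α - Real.cos (θ t)) * I₃ * ω₃ t := by
  have hderiv (t : ℝ) : HasDerivAt
      (fun t ↦ I₁ * φ' t * sin (θ t) ^ 2 - (α - cos (θ t)) * I₃ * ω₃ t) 0 t := by
    have hD : I₁ * I₃ + m * R ^ 2 * I₁ * sin (θ t) ^ 2
        + m * R ^ 2 * I₃ * (α - cos (θ t)) ^ 2 ≠ 0 := by positivity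
    convert hasDerivAt_jellett (hθ t) (hφ' t) (hω t) using 1
    exact (jellett_derivative_eq_zero (sin_sq_add_cos_sq (θ t)) hD).symm
  exact is_const_of_deriv_eq_zero (fun t ↦ (hderiv t).differentiableAt)
    (fun t ↦ (hderiv t).deriv)

theorem jellett_integral_conserved
    (m R I₁ I₃ α : ℝ) (hm : 0 < m) (hR : 0 < R) (hI₁ : 0 < I₁) (hI₃ : 0 < I₃)
    (hα : 0 < α) (hα1 : α < 1)
    (θ φ ω₃ θ' φ' : ℝ → ℝ)
    (hrange : ∀ t, θ t ∈ Set.Ioo 0 Real.pi)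
    (hθ : ∀ t, HasDerivAt θ (θ' t) t)
    (hφ : ∀ t, HasDerivAt φ (φ' t) t)
    (hφ' : ∀ t, HasDerivAt φ'
      ((ω₃ t * θ' t / Real.sin (θ t)) *
        ((I₃ ^ 2 + m * R ^ 2 * I₃ * (1 - α * Real.cos (θ t))) /
          (I₁ * I₃ + m * R ^ 2 * I₁ * Real.sin (θ t) ^ 2 +
            m * R ^ 2 * I₃ * (α - Real.cos (θ t)) ^ 2))
        - 2 * φ' t * θ' t * Real.cos (θ t) / Real.sin (θ t)) t)
    (hω : ∀ t, HasDerivAt ω₃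
      (-(ω₃ t) * θ' t * Real.sin (θ t) *
        ((m * R ^ 2 * I₃ * (α - Real.cos (θ t)) + m * R ^ 2 * I₁ * Real.cos (θ t)) /
          (m * R ^ 2 * I₃ * (α - Real.cos (θ t)) ^ 2 + I₁ * I₃ +
            m * R ^ 2 * I₁ * Real.sin (θ t) ^ 2))) t) :
    ∀ s t : ℝ,
      I₁ * φ' s * Real.sin (θ s) ^ 2 - (α - Real.cos (θ s)) * I₃ * ω₃ s
      = I₁ * φ' t * Real.sin (θ t) ^ 2 - (α - Real.cos (θ t)) * I₃ * ω₃ t :=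
  jellett_integral_conserved_general m R I₁ I₃ α hm hI₁ hI₃ θ ω₃ θ' φ' hθ hφ' hω
end

section
/- Let d(z) = γ + β(α - z)² + γβ(1 - z²) with 0 < α < 1, β, γ > 0, and fix real constants D, λ with D/λ ≠ -(γ + β(α - 1)²)^{1/2}/(α - 1) and D/λ ≠ -(γ + β(α + 1)²)^{1/2}/(α + 1) (and λ ≠ 0). Define the effective potential V(z) = mgR(1 - αz) + (1/(2I₃ d(z)))[ (λ√(d(z)) + (α - z)D)²(β(α - z)² + γ)/(γ²(1 - z²)) + D²(β(1 - z²) + 1) + 2Dβ(α - z)(λ√(d(z)) + (α - z)D)/γ ]. Then V(cos θ) → +∞ as θ → 0⁺ and as θ → π⁻. -/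
open Filter Set

private lemma aux_inv_blowup {z₀ : ℝ} (hz₀ : z₀ = 1 ∨ z₀ = -1) :
    Tendsto (fun z : ℝ => (1 - z ^ 2)⁻¹) (nhdsWithin z₀ (Ioo (-1) 1)) atTop := by
  have h1 : Tendsto (fun z : ℝ => 1 - z ^ 2) (nhdsWithin z₀ (Ioo (-1) 1)) (nhdsWithin 0 (Ioi 0)) := by
    rw [tendsto_nhdsWithin_iff]
    constructor
    · have hc : Tendsto (fun z : ℝ => 1 - z ^ 2) (nhds z₀) (nhds (1 - z₀ ^ 2)) :=
        (continuous_const.sub (continuous_pow 2)).tendsto z₀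
      have hz : 1 - z₀ ^ 2 = 0 := by rcases hz₀ with h | h <;> rw [h] <;> norm_num
      rw [hz] at hc
      exact hc.mono_left nhdsWithin_le_nhds
    · filter_upwards [self_mem_nhdsWithin] with z hz
      have h1 := hz.1; have h2 := hz.2
      simp only [mem_Ioi]
      nlinarith
  exact tendsto_inv_nhdsGT_zero.comp h1

private lemma aux_blowup {V N B : ℝ → ℝ} {z₀ : ℝ}
    (hz₀ : z₀ = 1 ∨ z₀ = -1)
    (hVeq : ∀ z ∈ Ioo (-1 : ℝ) 1, V z = B z + N z * (1 - z ^ 2)⁻¹)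
    (hN : ContinuousAt N z₀) (hB : ContinuousAt B z₀) (hNpos : 0 < N z₀) :
    Tendsto V (nhdsWithin z₀ (Ioo (-1) 1)) atTop := by
  have h := (hB.tendsto.mono_left nhdsWithin_le_nhds).add_atTop
    ((hN.tendsto.mono_left nhdsWithin_le_nhds).pos_mul_atTop hNpos (aux_inv_blowup hz₀))
  refine h.congr' ?_
  filter_upwards [self_mem_nhdsWithin] with z hz
  exact (hVeq z hz).symm

theorem potential_blows_up_at_vertical
    (m g R I₃ α β γ D lam : ℝ)
    (hm : 0 < m) (hg : 0 < g) (hR : 0 < R) (hI₃ : 0 < I₃)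
    (hα : 0 < α) (hα1 : α < 1) (hβ : 0 < β) (hγ : 0 < γ)
    (hlam : lam ≠ 0)
    (hratio1 : D / lam ≠ -Real.sqrt (γ + β * (α - 1) ^ 2) / (α - 1))
    (hratio2 : D / lam ≠ -Real.sqrt (γ + β * (α + 1) ^ 2) / (α + 1))
    (d V : ℝ → ℝ)
    (hd : ∀ z, d z = γ + β * (α - z) ^ 2 + γ * β * (1 - z ^ 2))
    (hV : ∀ z, V z = m * g * R * (1 - α * z) + (1 / (2 * I₃ * d z)) *
      ((lam * Real.sqrt (d z) + (α - z) * D) ^ 2 * (β * (α - z) ^ 2 + γ) /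
          (γ ^ 2 * (1 - z ^ 2))
        + D ^ 2 * (β * (1 - z ^ 2) + 1)
        + 2 * D * β * (α - z) * (lam * Real.sqrt (d z) + (α - z) * D) / γ)) :
    Tendsto (fun θ : ℝ => V (Real.cos θ)) (nhdsWithin 0 (Ioi 0)) atTop ∧
    Tendsto (fun θ : ℝ => V (Real.cos θ)) (nhdsWithin Real.pi (Iio Real.pi)) atTop := by
  have hdc : Continuous d := by
    rw [show d = fun z => γ + β * (α - z) ^ 2 + γ * β * (1 - z ^ 2) from funext hd]
    fun_prop
  set X : ℝ → ℝ := fun z => lam * Real.sqrt (d z) + (α - z) * D with hX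
  set N : ℝ → ℝ := fun z => X z ^ 2 * (β * (α - z) ^ 2 + γ) / (γ ^ 2 * (2 * I₃ * d z)) with hN
  set B : ℝ → ℝ := fun z => m * g * R * (1 - α * z) +
      (D ^ 2 * (β * (1 - z ^ 2) + 1) + 2 * D * β * (α - z) * X z / γ) / (2 * I₃ * d z) with hB
  have hXc : Continuous X := by fun_prop
  have hVeq : ∀ z ∈ Ioo (-1 : ℝ) 1, V z = B z + N z * (1 - z ^ 2)⁻¹ := by
    intro z hz
    have h1 : 0 < 1 - z ^ 2 := by nlinarith [hz.1, hz.2]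
    have hdz : 0 < d z := by
      rw [hd]
      have := mul_pos (mul_pos hγ hβ) h1
      have := mul_nonneg hβ.le (sq_nonneg (α - z))
      linarith
    rw [hV, hN, hB, hX]
    field_simp
    ring
  have hd1 : d 1 = γ + β * (α - 1) ^ 2 := by rw [hd]; ring
  have hdm1 : d (-1) = γ + β * (α + 1) ^ 2 := by rw [hd]; ring
  have hd1pos : 0 < d 1 := by rw [hd1]; positivity
  have hdm1pos : 0 < d (-1) := by rw [hdm1]; positivity
  have hX1 : X 1 ≠ 0 := by
    intro h
    apply hratio1
    rw [hX] at h; simp only at h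
    rw [hd1] at h
    have hα1' : α - 1 ≠ 0 := sub_ne_zero.2 (ne_of_lt hα1)
    field_simp
    linear_combination h
  have hXm1 : X (-1) ≠ 0 := by
    intro h
    apply hratio2
    rw [hX] at h; simp only at h
    rw [hdm1] at h
    have hα1' : α + 1 ≠ 0 := by positivity
    field_simp
    linear_combination h
  have hNcont : ∀ z₀ : ℝ, 0 < d z₀ → ContinuousAt N z₀ := by
    intro z₀ hz₀
    apply ContinuousAt.div
    · fun_prop
    · fun_prop
    · have : 0 < γ ^ 2 * (2 * I₃ * d z₀) := by positivity
      exact ne_of_gt this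
  have hBcont : ∀ z₀ : ℝ, 0 < d z₀ → ContinuousAt B z₀ := by
    intro z₀ hz₀
    apply ContinuousAt.add
    · fun_prop
    · apply ContinuousAt.div
      · have : (0:ℝ) < γ := hγ
        fun_prop (disch := positivity)
      · fun_prop
      · have : 0 < 2 * I₃ * d z₀ := by positivity
        exact ne_of_gt this
  have hNpos : ∀ z₀ : ℝ, 0 < d z₀ → X z₀ ≠ 0 → 0 < N z₀ := by
    intro z₀ hz₀ hXz
    rw [hN]
    have h1 : 0 < X z₀ ^ 2 := (sq_nonneg _).lt_of_ne' (pow_ne_zero 2 hXz)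
    have h2 : 0 < β * (α - z₀) ^ 2 + γ := by positivity
    have h3 : 0 < γ ^ 2 * (2 * I₃ * d z₀) := by positivity
    exact div_pos (mul_pos h1 h2) h3
  have hlim1 : Tendsto V (nhdsWithin 1 (Ioo (-1) 1)) atTop :=
    aux_blowup (Or.inl rfl) hVeq (hNcont 1 hd1pos) (hBcont 1 hd1pos) (hNpos 1 hd1pos hX1)
  have hlim2 : Tendsto V (nhdsWithin (-1) (Ioo (-1) 1)) atTop :=
    aux_blowup (Or.inr rfl) hVeq (hNcont (-1) hdm1pos) (hBcont (-1) hdm1pos) (hNpos (-1) hdm1pos hXm1)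
  constructor
  · refine hlim1.comp ?_
    rw [tendsto_nhdsWithin_iff]
    constructor
    · have := Real.continuous_cos.tendsto 0
      rw [Real.cos_zero] at this
      exact this.mono_left nhdsWithin_le_nhds
    · filter_upwards [Ioo_mem_nhdsGT_of_mem (left_mem_Ico.2 Real.pi_pos)] with θ hθ
      constructor
      · have := Real.cos_lt_cos_of_nonneg_of_le_pi (le_of_lt hθ.1) le_rfl hθ.2
        rw [Real.cos_pi] at this
        exact this
      · have := Real.cos_lt_cos_of_nonneg_of_le_pi le_rfl hθ.2.le hθ.1
        rw [Real.cos_zero] at this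
        exact this
  · refine hlim2.comp ?_
    rw [tendsto_nhdsWithin_iff]
    constructor
    · have := Real.continuous_cos.tendsto Real.pi
      rw [Real.cos_pi] at this
      exact this.mono_left nhdsWithin_le_nhds
    · filter_upwards [Ioo_mem_nhdsLT_of_mem (right_mem_Ioc.2 Real.pi_pos)] with θ hθ
      constructor
      · have := Real.cos_lt_cos_of_nonneg_of_le_pi (le_of_lt hθ.1) le_rfl hθ.2
        rw [Real.cos_pi] at this
        exact this
      · have := Real.cos_lt_cos_of_nonneg_of_le_pi le_rfl hθ.2.le hθ.1
        rw [Real.cos_zero] at this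
        exact this
end

section
/- Let V(z) = mgR(1 - αz) + (λ²/(2I₁(1 - z²)))·((mR²(α - z)²)/I₁ + 1) — equivalently V(z) = mgR(1 - αz) + (λ²/(2I₁²(1 - z²)))(mR²(α - z)² + I₁). Then for λ ≠ 0, V is strictly convex on (-1, 1), tends to +∞ as z → ±1, and has exactly one minimum in (-1, 1). -/
open Filter Set

private lemma strictConvexOn_congr' {s : Set ℝ} {f g : ℝ → ℝ}
    (hf : StrictConvexOn ℝ s f) (h : ∀ x ∈ s, g x = f x) : StrictConvexOn ℝ s g := by
  refine ⟨hf.1, fun x hx y hy hxy a b ha hb hab => ?_⟩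
  rw [h x hx, h y hy, h _ (hf.1 hx hy ha.le hb.le hab)]
  exact hf.2 hx hy hxy ha hb hab

private lemma strictConvexOn_inv_affine {c d : ℝ} (hd : d ≠ 0) {s : Set ℝ} (hs : Convex ℝ s)
    (hpos : ∀ z ∈ s, 0 < c + d * z) : StrictConvexOn ℝ s (fun z => (c + d * z)⁻¹) := by
  have H := strictConvexOn_zpow (m := -1) (by norm_num) (by norm_num)
  refine ⟨hs, fun x hx y hy hxy a b ha hb hab => ?_⟩
  have hx' : (c + d * x : ℝ) ∈ Ioi (0 : ℝ) := hpos x hx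
  have hy' : (c + d * y : ℝ) ∈ Ioi (0 : ℝ) := hpos y hy
  have hne : c + d * x ≠ c + d * y := by
    intro h
    exact hxy (mul_left_cancel₀ hd (by linarith))
  have key := H.2 hx' hy' hne ha hb hab
  simp only [smul_eq_mul, zpow_neg, zpow_one] at key ⊢
  have heq : c + d * (a * x + b * y) = a * (c + d * x) + b * (c + d * y) := by
    linear_combination c * hab.symm
  rw [heq]
  exact key

private lemma smul_strictConvexOn {c : ℝ} (hc : 0 < c) {s : Set ℝ} {f : ℝ → ℝ}
    (hf : StrictConvexOn ℝ s f) : StrictConvexOn ℝ s (fun x => c * f x) := by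
  refine ⟨hf.1, fun x hx y hy hxy a b ha hb hab => ?_⟩
  have := hf.2 hx hy hxy ha hb hab
  simp only [smul_eq_mul] at this ⊢
  nlinarith [this]

private lemma convexOn_affine (A B : ℝ) {s : Set ℝ} (hs : Convex ℝ s) :
    ConvexOn ℝ s (fun z => A + B * z) := by
  refine ⟨hs, fun x hx y hy a b ha hb hab => le_of_eq ?_⟩
  simp only [smul_eq_mul]
  linear_combination A * hab.symm

set_option maxHeartbeats 1000000 in
theorem potential_D_zero_convex
    (m g R I₁ α lam : ℝ)
    (hm : 0 < m) (hg : 0 < g) (hR : 0 < R) (hI₁ : 0 < I₁)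
    (hα : 0 < α) (hα1 : α < 1) (hlam : lam ≠ 0)
    (V : ℝ → ℝ)
    (hV : ∀ z, V z = m * g * R * (1 - α * z) +
      (lam ^ 2 / (2 * I₁ ^ 2 * (1 - z ^ 2))) * (m * R ^ 2 * (α - z) ^ 2 + I₁)) :
    StrictConvexOn ℝ (Set.Ioo (-1 : ℝ) 1) V ∧
    Tendsto V (nhdsWithin 1 (Set.Ioo (-1 : ℝ) 1)) atTop ∧
    Tendsto V (nhdsWithin (-1) (Set.Ioo (-1 : ℝ) 1)) atTop ∧
    ∃! z : ℝ, z ∈ Set.Ioo (-1 : ℝ) 1 ∧ IsMinOn V (Set.Ioo (-1 : ℝ) 1) z := by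
  have hI : I₁ ≠ 0 := ne_of_gt hI₁
  set s : ℝ := lam ^ 2 / (2 * I₁ ^ 2) with hs_def
  have hs : 0 < s := by positivity
  set c₁ : ℝ := s * (m * R ^ 2 * (α - 1) ^ 2 + I₁) / 2 with hc₁_def
  set c₂ : ℝ := s * (m * R ^ 2 * (α + 1) ^ 2 + I₁) / 2 with hc₂_def
  have hc₁ : 0 < c₁ := by positivity
  have hc₂ : 0 < c₂ := by positivity
  set A : ℝ := m * g * R - s * (m * R ^ 2) with hA_def
  set B : ℝ := -(m * g * R * α) with hB_def
  have pos1 : ∀ z ∈ Ioo (-1 : ℝ) 1, 0 < 1 + (-1) * z := by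
    intro z hz; obtain ⟨h1, h2⟩ := hz; linarith
  have pos2 : ∀ z ∈ Ioo (-1 : ℝ) 1, 0 < 1 + 1 * z := by
    intro z hz; obtain ⟨h1, h2⟩ := hz; linarith
  -- key partial-fraction identity
  have key : ∀ z ∈ Ioo (-1 : ℝ) 1,
      V z = c₁ * (1 + (-1) * z)⁻¹ + c₂ * (1 + 1 * z)⁻¹ + (A + B * z) := by
    intro z hz
    have h1 : (1 : ℝ) + (-1) * z ≠ 0 := ne_of_gt (pos1 z hz)
    have h2 : (1 : ℝ) + 1 * z ≠ 0 := ne_of_gt (pos2 z hz)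
    have h3 : (1 : ℝ) - z ^ 2 ≠ 0 := by
      intro h
      have : (1 + (-1) * z) * (1 + 1 * z) = 0 := by linear_combination h
      rcases mul_eq_zero.1 this with h' | h' <;> [exact h1 h'; exact h2 h']
    have e1 : (1 + (-1) * z)⁻¹ = (1 + 1 * z) / (1 - z ^ 2) := by
      rw [eq_div_iff h3, inv_mul_eq_div, div_eq_iff h1]
      ring
    have e2 : (1 + 1 * z)⁻¹ = (1 + (-1) * z) / (1 - z ^ 2) := by
      rw [eq_div_iff h3, inv_mul_eq_div, div_eq_iff h2]
      ring
    rw [hV, e1, e2, hc₁_def, hc₂_def, hA_def, hB_def, hs_def]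
    field_simp [h3, hI]
    ring
  -- strict convexity
  have hconv : StrictConvexOn ℝ (Ioo (-1 : ℝ) 1) V := by
    have h1 : StrictConvexOn ℝ (Ioo (-1 : ℝ) 1) (fun z => c₁ * (1 + (-1) * z)⁻¹) :=
      smul_strictConvexOn hc₁
        (strictConvexOn_inv_affine (by norm_num) (convex_Ioo _ _) pos1)
    have h2 : StrictConvexOn ℝ (Ioo (-1 : ℝ) 1) (fun z => c₂ * (1 + 1 * z)⁻¹) :=
      smul_strictConvexOn hc₂
        (strictConvexOn_inv_affine (by norm_num) (convex_Ioo _ _) pos2)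
    have haff : ConvexOn ℝ (Ioo (-1 : ℝ) 1) (fun z => A + B * z) :=
      convexOn_affine A B (convex_Ioo _ _)
    have hW := (h1.add h2).add_convexOn haff
    exact strictConvexOn_congr' hW (fun x hx => by
      rw [key x hx]; simp [Pi.add_apply])
  -- tendsto at 1
  have htop1 : Tendsto V (nhdsWithin 1 (Ioo (-1 : ℝ) 1)) atTop := by
    have h0 : Tendsto (fun z : ℝ => 1 + (-1) * z) (nhdsWithin 1 (Ioo (-1 : ℝ) 1))
        (nhdsWithin 0 (Ioi 0)) := by
      apply tendsto_nhdsWithin_of_tendsto_nhds_of_eventually_within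
      · have hc : Continuous (fun z : ℝ => 1 + (-1) * z) := by continuity
        exact (hc.tendsto' 1 0 (by norm_num)).mono_left nhdsWithin_le_nhds
      · filter_upwards [self_mem_nhdsWithin] with z hz
        exact pos1 z hz
    have hinv : Tendsto (fun z : ℝ => (1 + (-1) * z)⁻¹)
        (nhdsWithin 1 (Ioo (-1 : ℝ) 1)) atTop := tendsto_inv_nhdsGT_zero.comp h0
    have hmul := hinv.const_mul_atTop' hc₁
    have hct : ContinuousAt (fun z : ℝ => c₂ * (1 + 1 * z)⁻¹ + (A + B * z)) 1 := by
      refine ContinuousAt.add ?_ (by fun_prop)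
      exact continuousAt_const.mul
        (((continuousAt_const.add (continuousAt_const.mul continuousAt_id))).inv₀ (by norm_num))
    have hrest := hct.tendsto.mono_left
      (nhdsWithin_le_nhds : nhdsWithin (1:ℝ) (Ioo (-1 : ℝ) 1) ≤ nhds 1)
    have hsum := hrest.add_atTop hmul
    apply hsum.congr'
    filter_upwards [self_mem_nhdsWithin] with z hz
    rw [key z hz]; ring
  -- tendsto at -1
  have htop2 : Tendsto V (nhdsWithin (-1) (Ioo (-1 : ℝ) 1)) atTop := by
    have h0 : Tendsto (fun z : ℝ => 1 + 1 * z) (nhdsWithin (-1) (Ioo (-1 : ℝ) 1))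
        (nhdsWithin 0 (Ioi 0)) := by
      apply tendsto_nhdsWithin_of_tendsto_nhds_of_eventually_within
      · have hc : Continuous (fun z : ℝ => 1 + 1 * z) := by continuity
        exact (hc.tendsto' (-1) 0 (by norm_num)).mono_left nhdsWithin_le_nhds
      · filter_upwards [self_mem_nhdsWithin] with z hz
        exact pos2 z hz
    have hinv : Tendsto (fun z : ℝ => (1 + 1 * z)⁻¹)
        (nhdsWithin (-1) (Ioo (-1 : ℝ) 1)) atTop := tendsto_inv_nhdsGT_zero.comp h0
    have hmul := hinv.const_mul_atTop' hc₂
    have hct : ContinuousAt (fun z : ℝ => c₁ * (1 + (-1) * z)⁻¹ + (A + B * z)) (-1) := by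
      refine ContinuousAt.add ?_ (by fun_prop)
      exact continuousAt_const.mul
        (((continuousAt_const.add (continuousAt_const.mul continuousAt_id))).inv₀ (by norm_num))
    have hrest := hct.tendsto.mono_left
      (nhdsWithin_le_nhds : nhdsWithin (-1:ℝ) (Ioo (-1 : ℝ) 1) ≤ nhds (-1))
    have hsum := hrest.add_atTop hmul
    apply hsum.congr'
    filter_upwards [self_mem_nhdsWithin] with z hz
    rw [key z hz]; ring
  -- continuity of V on the interval
  have hVcont : ContinuousOn V (Ioo (-1 : ℝ) 1) := by
    have hWc : ContinuousOn (fun z : ℝ => c₁ * (1 + (-1) * z)⁻¹ + c₂ * (1 + 1 * z)⁻¹ +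
        (A + B * z)) (Ioo (-1 : ℝ) 1) := by
      refine ContinuousOn.add (ContinuousOn.add ?_ ?_) (by fun_prop)
      · exact continuousOn_const.mul
          ((continuousOn_const.add (continuousOn_const.mul continuousOn_id)).inv₀
            fun z hz => ne_of_gt (pos1 z hz))
      · exact continuousOn_const.mul
          ((continuousOn_const.add (continuousOn_const.mul continuousOn_id)).inv₀
            fun z hz => ne_of_gt (pos2 z hz))
    exact hWc.congr key
  -- existence and uniqueness of the minimum
  have hmem0 : (0 : ℝ) ∈ Ioo (-1 : ℝ) 1 := by constructor <;> norm_num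
  have hev1 : {z : ℝ | V 0 < V z} ∈ nhdsWithin (1:ℝ) (Ioo (-1 : ℝ) 1) :=
    htop1.eventually (eventually_gt_atTop (V 0))
  have hev2 : {z : ℝ | V 0 < V z} ∈ nhdsWithin (-1:ℝ) (Ioo (-1 : ℝ) 1) :=
    htop2.eventually (eventually_gt_atTop (V 0))
  obtain ⟨δ, hδ, hδ'⟩ := Metric.mem_nhdsWithin_iff.1 hev1
  obtain ⟨ε, hε, hε'⟩ := Metric.mem_nhdsWithin_iff.1 hev2
  set b : ℝ := max 0 (1 - δ / 2) with hb_def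
  set a : ℝ := min 0 (-1 + ε / 2) with ha_def
  have hb1 : b < 1 := by
    apply max_lt (by norm_num); linarith
  have hb0 : (0 : ℝ) ≤ b := le_max_left _ _
  have ha1 : -1 < a := by
    apply lt_min (by norm_num); linarith
  have ha0 : a ≤ 0 := min_le_left _ _
  have hKsub : Icc a b ⊆ Ioo (-1 : ℝ) 1 := fun z hz =>
    ⟨lt_of_lt_of_le ha1 hz.1, lt_of_le_of_lt hz.2 hb1⟩
  have hbig1 : ∀ z ∈ Ioo (-1 : ℝ) 1, b < z → V 0 < V z := by
    intro z hz hbz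
    apply hδ'
    constructor
    · rw [Metric.mem_ball, Real.dist_eq, abs_of_nonpos (by linarith [hz.2])]
      have : 1 - δ / 2 ≤ b := le_max_right _ _
      linarith
    · exact hz
  have hbig2 : ∀ z ∈ Ioo (-1 : ℝ) 1, z < a → V 0 < V z := by
    intro z hz haz
    apply hε'
    constructor
    · rw [Metric.mem_ball, Real.dist_eq, abs_of_nonneg (by linarith [hz.1])]
      have : a ≤ -1 + ε / 2 := min_le_right _ _
      linarith
    · exact hz
  have h0K : (0 : ℝ) ∈ Icc a b := ⟨ha0, hb0⟩
  obtain ⟨z₀, hz₀K, hz₀min⟩ := isCompact_Icc.exists_isMinOn ⟨0, h0K⟩ (hVcont.mono hKsub)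
  have hz₀Ioo : z₀ ∈ Ioo (-1 : ℝ) 1 := hKsub hz₀K
  have hmin : IsMinOn V (Ioo (-1 : ℝ) 1) z₀ := by
    rw [isMinOn_iff]
    intro z hz
    rcases le_or_gt z b with hzb | hzb
    · rcases le_or_gt a z with haz | haz
      · exact isMinOn_iff.1 hz₀min z ⟨haz, hzb⟩
      · calc V z₀ ≤ V 0 := isMinOn_iff.1 hz₀min 0 h0K
          _ ≤ V z := (hbig2 z hz haz).le
    · calc V z₀ ≤ V 0 := isMinOn_iff.1 hz₀min 0 h0K
        _ ≤ V z := (hbig1 z hz hzb).le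
  refine ⟨hconv, htop1, htop2, z₀, ⟨hz₀Ioo, hmin⟩, ?_⟩
  rintro y ⟨hy, hymin⟩
  exact hconv.eq_of_isMinOn hymin hmin hy hz₀Ioo
end

section
/- Let L, ŝ3 : ℝ → ℝ³ be differentiable, with ẑ a fixed unit vector, a(t) = R(α·ŝ3(t) − ẑ), and suppose L̇(t) = a(t) × F(t) for some F : ℝ → ℝ³ and ŝ3̇(t) = (1/I₁)(L(t) × ŝ3(t)). Then λ(t) = −⟨L(t), a(t)⟩ is constant. -/
open Matrix

/-!
Write `λ = -⟨L, a⟩`. Its derivative is `-(⟨L̇, a⟩ + ⟨L, ȧ⟩)`. The first term vanishes because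
`L̇ = a × F` is orthogonal to `a`; the second because `ȧ = Rα ŝ3̇ = (Rα / I₁) L × ŝ3` is orthogonal
to `L`. So `λ` has zero derivative everywhere and is constant.
-/

theorem HasDerivAt.dotProduct {𝕜 ι : Type*} [NontriviallyNormedField 𝕜] [Fintype ι]
    {f g : 𝕜 → ι → 𝕜} {f' g' : ι → 𝕜} {x : 𝕜}
    (hf : HasDerivAt f f' x) (hg : HasDerivAt g g' x) :
    HasDerivAt (fun y => f y ⬝ᵥ g y) (f' ⬝ᵥ g x + f x ⬝ᵥ g') x := by
  have hsum : HasDerivAt (fun y => ∑ i, f y i * g y i) (∑ i, (f' i * g x i + f x i * g' i)) x :=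
    HasDerivAt.fun_sum fun i _ => (hasDerivAt_pi.mp hf i).mul (hasDerivAt_pi.mp hg i)
  rw [Finset.sum_add_distrib] at hsum
  exact hsum

theorem dotProduct_eq_of_hasDerivAt_orthogonal {ι : Type*} [Fintype ι]
    {f g f' g' : ℝ → ι → ℝ}
    (hf : ∀ t, HasDerivAt f (f' t) t) (hg : ∀ t, HasDerivAt g (g' t) t)
    (hf' : ∀ t, f' t ⬝ᵥ g t = 0) (hg' : ∀ t, f t ⬝ᵥ g' t = 0) (s t : ℝ) :
    f s ⬝ᵥ g s = f t ⬝ᵥ g t := by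
  have hderiv : ∀ u, HasDerivAt (fun u => f u ⬝ᵥ g u) 0 u := fun u => by
    simpa only [hf', hg', add_zero] using (hf u).dotProduct (hg u)
  exact is_const_of_deriv_eq_zero (fun u => (hderiv u).differentiableAt)
    (fun u => (hderiv u).deriv) s t

theorem HasDerivAt.const_smul_smul_sub_const {E : Type*} [NormedAddCommGroup E] [NormedSpace ℝ E]
    {r c : ℝ} {z v' : E} {v : ℝ → E} {t : ℝ} (hv : HasDerivAt v v' t) :
    HasDerivAt (fun u => r • (c • v u - z)) ((r * c) • v') t := by
  rw [mul_smul]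
  exact ((hv.const_smul c).sub_const z).const_smul r

theorem jellett_vector_conserved_general
    (R α I₁ : ℝ)
    (zhat : Fin 3 → ℝ)
    (L s3 F : ℝ → Fin 3 → ℝ)
    (a : ℝ → Fin 3 → ℝ) (ha : ∀ t, a t = R • (α • s3 t - zhat))
    (hL : ∀ t, HasDerivAt L (crossProduct (a t) (F t)) t)
    (hs3 : ∀ t, HasDerivAt s3 ((1 / I₁) • crossProduct (L t) (s3 t)) t) :
    ∀ s t : ℝ, -(L s ⬝ᵥ a s) = -(L t ⬝ᵥ a t) := by
  obtain rfl : a = fun u => R • (α • s3 u - zhat) := funext ha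
  intro s t
  congr 1
  refine dotProduct_eq_of_hasDerivAt_orthogonal hL (fun u => (hs3 u).const_smul_smul_sub_const)
    (fun u => ?_) (fun u => ?_) s t
  · rw [dotProduct_comm, dot_self_cross]
  · rw [dotProduct_smul, dotProduct_smul, dot_self_cross, smul_zero, smul_zero]

theorem jellett_vector_conserved
    (R α I₁ : ℝ) (hR : 0 < R) (hα : 0 < α) (hα1 : α < 1) (hI₁ : 0 < I₁)
    (zhat : Fin 3 → ℝ) (hz : zhat ⬝ᵥ zhat = 1)
    (L s3 F : ℝ → Fin 3 → ℝ)
    (a : ℝ → Fin 3 → ℝ) (ha : ∀ t, a t = R • (α • s3 t - zhat))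
    (hL : ∀ t, HasDerivAt L (crossProduct (a t) (F t)) t)
    (hs3 : ∀ t, HasDerivAt s3 ((1 / I₁) • crossProduct (L t) (s3 t)) t) :
    ∀ s t : ℝ, -(L s ⬝ᵥ a s) = -(L t ⬝ᵥ a t) :=
  jellett_vector_conserved_general R α I₁ zhat L s3 F a ha hL hs3
end
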